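/- arXiv:1210.2078 — 5 statements merged into one kernel-verified Lean document; each statement's English description precedes it below -/
import Mathlib

section
/- For any α ∈ (0,1] and μ > 0, the set C^α_μ of all continuous paths γ_t : [0,t] → ℝ^n (with t ranging over [0,T], γ_t(0) = 0) whose α-Hölder modulus ⟦γ_t⟧_α = sup_{0≤s<r≤t} |γ_t(s)−γ_t(r)|/|s−r|^α is at most μ, is a compact subset of the space Λ of all such continuous paths equipped with the parabolic metric d_p(γ_t, γ̄_{t̄}) := √|t−t̄| + sup_{0≤s≤t̄} |γ_{t,t̄}(s) − γ̄_{t̄}(s)|, where γ_{t,t̄} extends γ_t constantly to [0,t̄] (assuming t ≤ t̄). -/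
open Set

/-- The parabolic metric `d_p` on the space `Λ` of stopped paths:
a stopped path is a pair `(t, γ)` where the relevant values of `γ` are those on `[0, t]`;
the shorter path is extended constantly (via `min s t`) to compare on `[0, max t t']`. -/
noncomputable def parabolicDist {n : ℕ} (p q : ℝ × (ℝ → EuclideanSpace ℝ (Fin n))) : ℝ :=
  Real.sqrt |p.1 - q.1| +
    ⨆ s : Set.Icc (0 : ℝ) (max p.1 q.1), ‖p.2 (min s.1 p.1) - q.2 (min s.1 q.1)‖

/-- The set `C^α_μ ⊆ Λ`: stopped paths `(t, γ)` with `t ∈ [0,T]`, `γ` continuous on `[0,t]`,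
`γ 0 = 0`, whose `α`-Hölder modulus on `[0,t]` is at most `μ`. -/
def holderBall (n : ℕ) (T α μ : ℝ) : Set (ℝ × (ℝ → EuclideanSpace ℝ (Fin n))) :=
  {p | p.1 ∈ Icc (0 : ℝ) T ∧ ContinuousOn p.2 (Icc 0 p.1) ∧ p.2 0 = 0 ∧
    ∀ s ∈ Icc (0 : ℝ) p.1, ∀ r ∈ Icc (0 : ℝ) p.1, ‖p.2 s - p.2 r‖ ≤ μ * |s - r| ^ α}

/-!
Stopping a path of `C^α_μ` at its terminal time turns it into a `μ`-`α`-Hölder function on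
`[0, T]` vanishing at `0`; by Arzelà–Ascoli these functions form a compact set in the uniform
topology. Along a subsequence the terminal times `t_k` and the stopped paths `g_k` converge jointly
to some `(t, G)`, and the limit path is `G` on `[0, t]`. Its parabolic distance to the `k`-th path
is at most `√|t_k - t| + μ |t_k - t| ^ α + ‖g_k - G‖_∞`, the middle term paying for stopping `G`
at `t` rather than at `t_k`.
-/

open Filter Topology BoundedContinuousFunction

theorem abs_min_sub_min_le_abs {R : Type*} [AddCommGroup R] [LinearOrder R] [IsOrderedAddMonoid R]
    (a b c : R) : |min a c - min b c| ≤ |a - b| := by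
  simpa using abs_min_sub_min_le_max a c b c

section PinnedHolderBall

variable {X E : Type*} [PseudoMetricSpace X] [NormedAddCommGroup E]

def pinnedHolderBall (x₀ : X) (μ α : ℝ) : Set (X →ᵇ E) :=
  {g | g x₀ = 0 ∧ ∀ x y, dist (g x) (g y) ≤ μ * dist x y ^ α}

theorem isClosed_pinnedHolderBall (x₀ : X) (μ α : ℝ) :
    IsClosed (pinnedHolderBall (E := E) x₀ μ α) := by
  simp only [pinnedHolderBall, ofPred_and, ofPred_forall]
  exact (isClosed_eq (continuous_eval_const x₀) continuous_const).inter <|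
    isClosed_iInter fun x => isClosed_iInter fun y =>
      isClosed_le ((continuous_eval_const x).dist (continuous_eval_const y)) continuous_const

theorem equicontinuous_pinnedHolderBall (x₀ : X) (μ : ℝ) {α : ℝ} (hα : 0 < α) :
    Equicontinuous ((↑) : pinnedHolderBall (E := E) x₀ μ α → X → E) := by
  refine Metric.equicontinuous_of_continuity_modulus (fun d => μ * d ^ α) ?_ _
    fun x y g => g.2.2 x y
  have hb : Continuous fun d : ℝ => μ * d ^ α :=
    continuous_const.mul (Real.continuous_rpow_const hα.le)
  exact hb.tendsto' 0 0 (by simp [Real.zero_rpow hα.ne'])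

theorem norm_le_of_mem_pinnedHolderBall [CompactSpace X] {x₀ : X} {μ α : ℝ} (hα : 0 ≤ α)
    {g : X →ᵇ E} (hg : g ∈ pinnedHolderBall x₀ μ α) (x : X) :
    ‖g x‖ ≤ |μ| * Metric.diam (univ : Set X) ^ α := by
  have hd : dist x x₀ ≤ Metric.diam (univ : Set X) :=
    Metric.dist_le_diam_of_mem Metric.isBounded_of_compactSpace (mem_univ x) (mem_univ x₀)
  calc ‖g x‖ = dist (g x) (g x₀) := by rw [hg.1, dist_zero_right]
    _ ≤ μ * dist x x₀ ^ α := hg.2 x x₀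
    _ ≤ |μ| * Metric.diam (univ : Set X) ^ α :=
      mul_le_mul (le_abs_self μ) (Real.rpow_le_rpow dist_nonneg hd hα)
        (Real.rpow_nonneg dist_nonneg α) (abs_nonneg μ)

theorem isCompact_pinnedHolderBall [CompactSpace X] [ProperSpace E] (x₀ : X) (μ : ℝ) {α : ℝ}
    (hα : 0 < α) : IsCompact (pinnedHolderBall (E := E) x₀ μ α) :=
  arzela_ascoli₂ (Metric.closedBall 0 _) (isCompact_closedBall 0 _) _
    (isClosed_pinnedHolderBall x₀ μ α)
    (fun _ x hg => mem_closedBall_zero_iff.2 (norm_le_of_mem_pinnedHolderBall hα.le hg x))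
    (equicontinuous_pinnedHolderBall x₀ μ hα)

end PinnedHolderBall

section StoppedPaths

variable {n : ℕ} {T α μ : ℝ}

theorem parabolicDist_nonneg (p q : ℝ × (ℝ → EuclideanSpace ℝ (Fin n))) :
    0 ≤ parabolicDist p q :=
  add_nonneg (Real.sqrt_nonneg _) (Real.iSup_nonneg fun _ => norm_nonneg _)

theorem exists_stopped_mem_pinnedHolderBall (hT : 0 ≤ T) (hμ : 0 ≤ μ) (hα : 0 ≤ α)
    {p : ℝ × (ℝ → EuclideanSpace ℝ (Fin n))} (hp : p ∈ holderBall n T α μ) :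
    ∃ g ∈ pinnedHolderBall (⟨0, left_mem_Icc.2 hT⟩ : Icc 0 T) μ α,
      ∀ s : Icc 0 T, g s = p.2 (min s p.1) := by
  have hmem : ∀ s : Icc (0 : ℝ) T, min s.1 p.1 ∈ Icc 0 p.1 :=
    fun s => ⟨le_min s.2.1 hp.1.1, min_le_right _ _⟩
  refine ⟨mkOfCompact ⟨fun s => p.2 (min s.1 p.1),
    hp.2.1.comp_continuous (continuous_subtype_val.min continuous_const) hmem⟩,
    ⟨?_, fun s r => ?_⟩, fun s => rfl⟩
  · change p.2 (min 0 p.1) = 0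
    rw [min_eq_left hp.1.1]
    exact hp.2.2.1
  · calc ‖p.2 (min s.1 p.1) - p.2 (min r.1 p.1)‖
        ≤ μ * |min s.1 p.1 - min r.1 p.1| ^ α := hp.2.2.2 _ (hmem s) _ (hmem r)
      _ ≤ μ * dist s r ^ α := by
        gcongr
        exact abs_min_sub_min_le_abs _ _ _

theorem mk_IccExtend_mem_holderBall (hT : 0 ≤ T)
    {G : Icc 0 T →ᵇ EuclideanSpace ℝ (Fin n)}
    (hG : G ∈ pinnedHolderBall (⟨0, left_mem_Icc.2 hT⟩ : Icc 0 T) μ α) {t : ℝ}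
    (ht : t ∈ Icc 0 T) : (t, IccExtend hT G) ∈ holderBall n T α μ := by
  have hsub : Icc 0 t ⊆ Icc 0 T := Icc_subset_Icc_right ht.2
  refine ⟨ht, G.continuous.Icc_extend'.continuousOn, ?_, fun s hs r hr => ?_⟩
  · change IccExtend hT G 0 = 0
    rw [IccExtend_of_mem hT G (left_mem_Icc.2 hT)]
    exact hG.1
  · change ‖IccExtend hT G s - IccExtend hT G r‖ ≤ _
    rw [IccExtend_of_mem hT G (hsub hs), IccExtend_of_mem hT G (hsub hr), ← dist_eq_norm]
    exact hG.2 _ _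

theorem parabolicDist_IccExtend_le (hT : 0 ≤ T) (hμ : 0 ≤ μ) (hα : 0 ≤ α)
    {q : ℝ × (ℝ → EuclideanSpace ℝ (Fin n))} (hq : q.1 ∈ Icc 0 T)
    {g G : Icc 0 T →ᵇ EuclideanSpace ℝ (Fin n)} (hg : ∀ s : Icc 0 T, g s = q.2 (min s q.1))
    (hG : ∀ x y, dist (G x) (G y) ≤ μ * dist x y ^ α) {t : ℝ} (ht : t ∈ Icc 0 T) :
    parabolicDist q (t, IccExtend hT G) ≤ √|q.1 - t| + (μ * |q.1 - t| ^ α + dist g G) := by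
  refine add_le_add le_rfl (Real.iSup_le (fun s => ?_) (by positivity))
  let u : Icc 0 T := ⟨min s q.1, le_min s.2.1 hq.1, (min_le_right _ _).trans hq.2⟩
  let v : Icc 0 T := ⟨min s t, le_min s.2.1 ht.1, (min_le_right _ _).trans ht.2⟩
  have huv : dist u v ≤ |q.1 - t| := by
    change |min s.1 q.1 - min s.1 t| ≤ _
    rw [min_comm s.1, min_comm s.1]
    exact abs_min_sub_min_le_abs _ _ _
  calc ‖q.2 (min s q.1) - IccExtend hT G (min s t)‖ = dist (g u) (G v) := by
        rw [IccExtend_of_mem hT G v.2, dist_eq_norm, hg, min_eq_left (min_le_right _ _)]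
    _ ≤ dist (g u) (G u) + dist (G u) (G v) := dist_triangle _ _ _
    _ ≤ dist g G + μ * |q.1 - t| ^ α := by
        gcongr
        · exact dist_coe_le_dist u
        · exact (hG u v).trans (by gcongr)
    _ = μ * |q.1 - t| ^ α + dist g G := add_comm _ _

end StoppedPaths

theorem holderBall_isSeqCompact_general {n : ℕ} (T α μ : ℝ) (hα : 0 < α)
    (hμ : 0 < μ) (γ : ℕ → ℝ × (ℝ → EuclideanSpace ℝ (Fin n)))
    (hγ : ∀ k, γ k ∈ holderBall n T α μ) :
    ∃ φ : ℕ → ℕ, StrictMono φ ∧ ∃ p ∈ holderBall n T α μ,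
      Filter.Tendsto (fun k => parabolicDist (γ (φ k)) p) Filter.atTop (nhds 0) := by
  have hT : 0 ≤ T := (hγ 0).1.1.trans (hγ 0).1.2
  choose g hg hγg using fun k => exists_stopped_mem_pinnedHolderBall hT hμ.le hα.le (hγ k)
  obtain ⟨⟨t, G⟩, ⟨ht, hG⟩, φ, hφ, hlim⟩ :=
    (isCompact_Icc.prod (isCompact_pinnedHolderBall _ μ hα)).isSeqCompact
      (x := fun k => ((γ k).1, g k)) fun k => ⟨(hγ k).1, hg k⟩
  refine ⟨φ, hφ, (t, IccExtend hT G), mk_IccExtend_mem_holderBall hT hG ht, ?_⟩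
  have hbound : Continuous fun x : ℝ × (Icc 0 T →ᵇ EuclideanSpace ℝ (Fin n)) =>
      √|x.1 - t| + (μ * |x.1 - t| ^ α + dist x.2 G) := by
    fun_prop (disch := exact hα.le)
  refine squeeze_zero (fun k => parabolicDist_nonneg _ _)
    (fun k => parabolicDist_IccExtend_le hT hμ.le hα.le (hγ (φ k)).1 (hγg (φ k)) hG.2 ht) ?_
  exact (hbound.tendsto' (t, G) 0 (by simp [Real.zero_rpow hα.ne'])).comp hlim

/-- `C^α_μ` is a (sequentially) compact subset of `(Λ, d_p)`: every sequence in `C^α_μ`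
admits a subsequence converging, in the parabolic metric, to a limit lying in `C^α_μ`. -/
theorem holderBall_isSeqCompact {n : ℕ} (T α μ : ℝ) (hT : 0 < T) (hα : 0 < α) (hα1 : α ≤ 1)
    (hμ : 0 < μ) (γ : ℕ → ℝ × (ℝ → EuclideanSpace ℝ (Fin n)))
    (hγ : ∀ k, γ k ∈ holderBall n T α μ) :
    ∃ φ : ℕ → ℕ, StrictMono φ ∧ ∃ p ∈ holderBall n T α μ,
      Filter.Tendsto (fun k => parabolicDist (γ (φ k)) p) Filter.atTop (nhds 0) :=
  holderBall_isSeqCompact_general T α μ hα hμ γ hγ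
end

section
/- Let γ_t ∈ Λ(ℝ^n) be a continuous path with α-Hölder modulus ⟦γ_t⟧_α ≤ μ, let 0 < ε ≤ μ/2, and define the perturbed path γ_t^ε by: γ_t^ε(s) := γ_t(s) if |γ_t(s) − γ_t(t)| ≤ (μ−ε)|s−t|^α, and γ_t^ε(s) := γ_t(t) + (μ−ε)(t−s)^α · (γ_t(s) − γ_t(t))/|γ_t(s) − γ_t(t)| otherwise. Then the α-Hölder modulus of γ_t^ε satisfies ⟦γ_t^ε⟧_α ≤ μ. -/
open Set

open RealInnerProductSpace in
private lemma holder_smul_sub_sq {E : Type*} [NormedAddCommGroup E] [InnerProductSpace ℝ E]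
    (c d : ℝ) (hc : 0 ≤ c) (hd : 0 ≤ d) (a b : E) :
    ‖c • a - d • b‖^2 = c^2*‖a‖^2 - 2*(c*d*⟪a, b⟫) + d^2*‖b‖^2 := by
  rw [norm_sub_sq_real, real_inner_smul_left, real_inner_smul_right, norm_smul, norm_smul,
    Real.norm_eq_abs, Real.norm_eq_abs, abs_of_nonneg hc, abs_of_nonneg hd]
  ring

private lemma holder_rpow_subadd {u v β : ℝ} (hu : 0 ≤ u) (hv : 0 ≤ v) (hb0 : 0 ≤ β)
    (hb1 : β ≤ 1) : (u + v) ^ β ≤ u ^ β + v ^ β := by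
  lift u to NNReal using hu
  lift v to NNReal using hv
  exact_mod_cast NNReal.rpow_add_le_add_rpow u v hb0 hb1

/-- Scalar core of the case where only the second point is truncated. -/
private lemma holder_sq_TF (P Q R R' M I : ℝ) (hP0 : 0 ≤ P) (hQ0 : 0 < Q)
    (hR'0 : 0 ≤ R') (hPR : P ≤ R) (hQR' : R' ≤ Q)
    (hI : P^2 - 2*I + Q^2 ≤ M^2) (hkey : R^2 - R'^2 ≤ M^2) :
    1^2*P^2 - 2*(1*(R'/Q)*I) + (R'/Q)^2*Q^2 ≤ M^2 := by
  have expand : Q*(1^2*P^2 - 2*(1*(R'/Q)*I) + (R'/Q)^2*Q^2)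
      = Q*P^2 - 2*(R'*I) + R'^2*Q := by
    field_simp
    try ring
  have hP2 : P^2 ≤ Q*R' + M^2 := by nlinarith [hPR, hP0, hkey, hQR', hR'0]
  have hmul : Q*(1^2*P^2 - 2*(1*(R'/Q)*I) + (R'/Q)^2*Q^2) ≤ Q*M^2 := by
    rw [expand]
    nlinarith [mul_le_mul_of_nonneg_left hI hR'0,
      mul_nonneg (sub_nonneg.mpr hQR') (by nlinarith [hP2] : (0:ℝ) ≤ Q*R' + M^2 - P^2)]
  exact le_of_mul_le_mul_left hmul hQ0

/-- Scalar core of the case where only the first point is truncated. -/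
private lemma holder_sq_FT (P Q R R' M I : ℝ) (hP0 : 0 < P) (hQ0 : 0 ≤ Q)
    (hR0 : 0 ≤ R) (hR'0 : 0 ≤ R') (hR'R : R' ≤ R) (hRP : R ≤ P) (hQR' : Q ≤ R')
    (hI : P^2 - 2*I + Q^2 ≤ M^2) (hM0 : 0 ≤ M) :
    (R/P)^2*P^2 - 2*((R/P)*1*I) + 1^2*Q^2 ≤ M^2 := by
  have expand : P*((R/P)^2*P^2 - 2*((R/P)*1*I) + 1^2*Q^2)
      = R^2*P - 2*(R*I) + Q^2*P := by
    field_simp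
    try ring
  have hQ2 : Q^2 ≤ P*R := by nlinarith [hQR', hR'R, hRP, hQ0, hR'0, hR0]
  have hmul : P*((R/P)^2*P^2 - 2*((R/P)*1*I) + 1^2*Q^2) ≤ P*M^2 := by
    rw [expand]
    nlinarith [mul_le_mul_of_nonneg_left hI hR0,
      mul_nonneg (sub_nonneg.mpr hRP) (by nlinarith [hQ2, sq_nonneg M] : (0:ℝ) ≤ P*R + M^2 - Q^2)]
  exact le_of_mul_le_mul_left hmul hP0

-- Scalar core of the case where both points are truncated.
set_option maxHeartbeats 1000000 in
private lemma holder_sq_FF (P Q R R' M I : ℝ) (hP0 : 0 < P) (hQ0 : 0 < Q)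
    (hR0 : 0 ≤ R) (hR'0 : 0 ≤ R') (hR'R : R' ≤ R) (hRP : R ≤ P) (hR'Q : R' ≤ Q)
    (hI : P^2 - 2*I + Q^2 ≤ M^2) (hkey : R^2 - R'^2 ≤ M^2) :
    (R/P)^2*P^2 - 2*((R/P)*(R'/Q)*I) + (R'/Q)^2*Q^2 ≤ M^2 := by
  have expand : (P*Q)*((R/P)^2*P^2 - 2*((R/P)*(R'/Q)*I) + (R'/Q)^2*Q^2)
      = P*Q*(R^2 + R'^2) - 2*(R*R'*I) := by
    field_simp
    try ring
  have hmul : (P*Q)*((R/P)^2*P^2 - 2*((R/P)*(R'/Q)*I) + (R'/Q)^2*Q^2) ≤ (P*Q)*M^2 := by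
    rw [expand]
    have hIb : R*R'*(P^2 + Q^2) - R*R'*M^2 ≤ 2*(R*R'*I) := by
      nlinarith [mul_le_mul_of_nonneg_left hI (mul_nonneg hR0 hR'0)]
    have hmain : P*Q*(R^2 + R'^2) - (R*R'*(P^2 + Q^2) - R*R'*M^2) ≤ P*Q*M^2 := by
      rcases eq_or_lt_of_le hR'0 with hR'z | hR'pos
      · -- R' = 0
        subst hR'z
        have hRM : R^2 ≤ M^2 := by nlinarith [hkey]
        nlinarith [mul_le_mul_of_nonneg_left hRM (le_of_lt (mul_pos hP0 hQ0))]
      · have hRpos : 0 < R := lt_of_lt_of_le hR'pos hR'R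
        have t1 : (0:ℝ) ≤ R * ((P*Q - R*R') * (M^2 - R^2 + R'^2)) := by
          apply mul_nonneg hR0
          apply mul_nonneg
          · nlinarith [hRP, hR'Q, hR0, hR'0]
          · nlinarith [hkey]
        have t2 : (0:ℝ) ≤ R' * (R*Q - P*R')^2 := mul_nonneg hR'0 (sq_nonneg _)
        have t3 : (0:ℝ) ≤ R' * ((R^2 - R'^2) * (P^2 - R^2)) := by
          apply mul_nonneg hR'0
          apply mul_nonneg
          · nlinarith [hR'R, hR'0]
          · nlinarith [hRP, hR0]
        by_contra hcon
        push_neg at hcon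
        have hneg : R * (P*Q*M^2
            - (P*Q*(R^2 + R'^2) - (R*R'*(P^2 + Q^2) - R*R'*M^2))) < 0 :=
          mul_neg_of_pos_of_neg hRpos (by linarith)
        nlinarith [t1, t2, t3, hneg]
    linarith
  exact le_of_mul_le_mul_left hmul (mul_pos hP0 hQ0)

set_option maxHeartbeats 1000000 in
open RealInnerProductSpace in
private lemma holder_aux {n : ℕ} (α μ ε t : ℝ)
    (hα : 0 < α) (hα2 : α ≤ 1 / 2) (hμ : 0 < μ) (hε : 0 < ε) (hεμ : ε ≤ μ / 2)
    (γ γε : ℝ → EuclideanSpace ℝ (Fin n))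
    (hhold : ∀ s ∈ Icc (0 : ℝ) t, ∀ r ∈ Icc (0 : ℝ) t, ‖γ s - γ r‖ ≤ μ * |s - r| ^ α)
    (hγε : ∀ s, γε s =
      if ‖γ s - γ t‖ ≤ (μ - ε) * |s - t| ^ α then γ s
      else γ t + (((μ - ε) * (t - s) ^ α) / ‖γ s - γ t‖) • (γ s - γ t))
    (s r : ℝ) (hs : s ∈ Icc (0:ℝ) t) (hr : r ∈ Icc (0:ℝ) t) (hsr : s ≤ r) :
    ‖γε s - γε r‖ ≤ μ * |s - r| ^ α := by
  obtain ⟨hs0, hst⟩ := hs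
  obtain ⟨hr0, hrt⟩ := hr
  have hμε : 0 < μ - ε := by linarith
  have hgs := hγε s
  have hgr := hγε r
  have hsabs : |s - t| = t - s := by rw [abs_sub_comm]; exact abs_of_nonneg (by linarith)
  have hrabs : |r - t| = t - r := by rw [abs_sub_comm]; exact abs_of_nonneg (by linarith)
  have hsrabs : |s - r| = r - s := by rw [abs_sub_comm]; exact abs_of_nonneg (by linarith)
  rw [hsabs] at hgs
  rw [hrabs] at hgr
  -- key power inequality
  have hpow : ((t - s) ^ α)^2 ≤ ((t - r) ^ α)^2 + ((r - s) ^ α)^2 := by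
    have hconv : ∀ x : ℝ, 0 ≤ x → x ^ (α * 2) = (x ^ α)^2 := fun x hx => by
      rw [Real.rpow_mul hx, show ((2:ℝ) = ((2:ℕ):ℝ)) by norm_num, Real.rpow_natCast]
    have h2 : ((t - r) + (r - s)) ^ (α * 2) ≤ (t - r) ^ (α * 2) + (r - s) ^ (α * 2) :=
      holder_rpow_subadd (by linarith) (by linarith) (by positivity) (by linarith)
    rw [show t - r + (r - s) = t - s by ring, hconv _ (by linarith : (0:ℝ) ≤ t - s),
      hconv _ (by linarith : (0:ℝ) ≤ t - r), hconv _ (by linarith : (0:ℝ) ≤ r - s)] at h2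
    exact h2
  have hX0 : (0:ℝ) ≤ (t - s) ^ α := Real.rpow_nonneg (by linarith) _
  have hY0 : (0:ℝ) ≤ (t - r) ^ α := Real.rpow_nonneg (by linarith) _
  have hZ0 : (0:ℝ) ≤ (r - s) ^ α := Real.rpow_nonneg (by linarith) _
  have hXY : (t - r) ^ α ≤ (t - s) ^ α :=
    Real.rpow_le_rpow (by linarith) (by linarith) hα.le
  have htmem : t ∈ Icc (0:ℝ) t := ⟨le_trans hs0 hst, le_refl t⟩
  -- generalize the vectors and scalars
  obtain ⟨a, ha⟩ : ∃ a : EuclideanSpace ℝ (Fin n), γ s - γ t = a := ⟨_, rfl⟩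
  obtain ⟨b, hb⟩ : ∃ b : EuclideanSpace ℝ (Fin n), γ r - γ t = b := ⟨_, rfl⟩
  have hPμ : ‖a‖ ≤ μ * (t - s) ^ α := by
    have h := hhold s ⟨hs0, hst⟩ t htmem
    rwa [hsabs, ha] at h
  have hQμ : ‖b‖ ≤ μ * (t - r) ^ α := by
    have h := hhold r ⟨hr0, hrt⟩ t htmem
    rwa [hrabs, hb] at h
  have hmm : ‖a - b‖ ≤ μ * |s - r| ^ α := by
    rw [← ha, ← hb, sub_sub_sub_cancel_right]
    exact hhold s ⟨hs0, hst⟩ r ⟨hr0, hrt⟩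
  rw [ha] at hgs
  rw [hb] at hgr
  -- inner product bound
  have hI : ‖a‖^2 - 2*⟪a, b⟫ + ‖b‖^2 ≤ (μ * |s - r| ^ α)^2 := by
    have hM0 : 0 ≤ μ * |s - r| ^ α := mul_nonneg hμ.le (by rw [hsrabs]; exact hZ0)
    have hsq : ‖a - b‖^2 ≤ (μ * |s - r| ^ α)^2 := by nlinarith [norm_nonneg (a - b), hmm]
    rwa [norm_sub_sq_real] at hsq
  have hR0 : (0:ℝ) ≤ (μ - ε) * (t - s) ^ α := mul_nonneg hμε.le hX0
  have hR'0 : (0:ℝ) ≤ (μ - ε) * (t - r) ^ α := mul_nonneg hμε.le hY0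
  have hR'R : (μ - ε) * (t - r) ^ α ≤ (μ - ε) * (t - s) ^ α :=
    mul_le_mul_of_nonneg_left hXY hμε.le
  have hMr0 : (0:ℝ) ≤ μ * |s - r| ^ α := mul_nonneg hμ.le (by rw [hsrabs]; exact hZ0)
  have hkey : ((μ - ε) * (t - s) ^ α)^2 - ((μ - ε) * (t - r) ^ α)^2
      ≤ (μ * |s - r| ^ α)^2 := by
    rw [hsrabs]
    have h5 : (μ - ε)^2 ≤ μ^2 := by nlinarith [hμε, hε]
    have e1 : (μ - ε)^2 * ((t - s) ^ α)^2
        ≤ (μ - ε)^2 * (((t - r) ^ α)^2 + ((r - s) ^ α)^2) :=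
      mul_le_mul_of_nonneg_left hpow (sq_nonneg _)
    have e2 : (μ - ε)^2 * ((r - s) ^ α)^2 ≤ μ^2 * ((r - s) ^ α)^2 :=
      mul_le_mul_of_nonneg_right h5 (sq_nonneg _)
    nlinarith [e1, e2]
  rcases le_or_gt ‖a‖ ((μ - ε) * (t - s) ^ α) with h1 | h1 <;>
    rcases le_or_gt ‖b‖ ((μ - ε) * (t - r) ^ α) with h2 | h2
  · -- no truncation on either side
    rw [if_pos h1] at hgs
    rw [if_pos h2] at hgr
    rw [hgs, hgr]
    exact hhold s ⟨hs0, hst⟩ r ⟨hr0, hrt⟩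
  · -- truncation at r only
    rw [if_pos h1] at hgs
    rw [if_neg (not_le.mpr h2)] at hgr
    have hQ0 : 0 < ‖b‖ := lt_of_le_of_lt hR'0 h2
    have hD : γε s - γε r = (1:ℝ) • a - (((μ - ε) * (t - r) ^ α)/‖b‖) • b := by
      rw [hgs, hgr, one_smul, ← ha]
      abel
    have hsq : ‖γε s - γε r‖^2 ≤ (μ * |s - r| ^ α)^2 := by
      rw [hD, holder_smul_sub_sq _ _ zero_le_one (div_nonneg hR'0 hQ0.le)]
      exact holder_sq_TF ‖a‖ ‖b‖ _ _ _ _ (norm_nonneg a) hQ0 hR'0 h1 h2.le hI hkey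
    exact le_of_pow_le_pow_left₀ two_ne_zero hMr0 hsq
  · -- truncation at s only
    rw [if_neg (not_le.mpr h1)] at hgs
    rw [if_pos h2] at hgr
    have hP0 : 0 < ‖a‖ := lt_of_le_of_lt hR0 h1
    have hD : γε s - γε r = (((μ - ε) * (t - s) ^ α)/‖a‖) • a - (1:ℝ) • b := by
      rw [hgs, hgr, one_smul, ← hb]
      abel
    have hsq : ‖γε s - γε r‖^2 ≤ (μ * |s - r| ^ α)^2 := by
      rw [hD, holder_smul_sub_sq _ _ (div_nonneg hR0 hP0.le) zero_le_one]
      exact holder_sq_FT ‖a‖ ‖b‖ _ _ _ _ hP0 (norm_nonneg b) hR0 hR'0 hR'R h1.le h2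
        hI hMr0
    exact le_of_pow_le_pow_left₀ two_ne_zero hMr0 hsq
  · -- truncation at both
    rw [if_neg (not_le.mpr h1)] at hgs
    rw [if_neg (not_le.mpr h2)] at hgr
    have hP0 : 0 < ‖a‖ := lt_of_le_of_lt hR0 h1
    have hQ0 : 0 < ‖b‖ := lt_of_le_of_lt hR'0 h2
    have hD : γε s - γε r = (((μ - ε) * (t - s) ^ α)/‖a‖) • a
        - (((μ - ε) * (t - r) ^ α)/‖b‖) • b := by
      rw [hgs, hgr]
      abel
    have hsq : ‖γε s - γε r‖^2 ≤ (μ * |s - r| ^ α)^2 := by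
      rw [hD, holder_smul_sub_sq _ _ (div_nonneg hR0 hP0.le) (div_nonneg hR'0 hQ0.le)]
      exact holder_sq_FF ‖a‖ ‖b‖ _ _ _ _ hP0 hQ0 hR0 hR'0 hR'R h1.le h2.le hI hkey
    exact le_of_pow_le_pow_left₀ two_ne_zero hMr0 hsq

/-- Lemma 5.1 (ii): the radial truncation `γ^ε` of a path `γ` with `α`-Hölder modulus `≤ μ`,
truncating `γ s` toward the endpoint value `γ t` at radius `(μ-ε)|s-t|^α`, again has
`α`-Hölder modulus `≤ μ` on `[0,t]`. -/
theorem holder_modulus_of_perturbation {n : ℕ} (T α μ ε t : ℝ)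
    (hα : 0 < α) (hα2 : α ≤ 1 / 2) (hμ : 0 < μ) (hε : 0 < ε) (hεμ : ε ≤ μ / 2)
    (hT : 0 < T) (ht : t ∈ Icc (0 : ℝ) T)
    (γ γε : ℝ → EuclideanSpace ℝ (Fin n))
    (hγ0 : γ 0 = 0) (hcont : ContinuousOn γ (Icc 0 t))
    (hhold : ∀ s ∈ Icc (0 : ℝ) t, ∀ r ∈ Icc (0 : ℝ) t, ‖γ s - γ r‖ ≤ μ * |s - r| ^ α)
    (hγε : ∀ s, γε s =
      if ‖γ s - γ t‖ ≤ (μ - ε) * |s - t| ^ α then γ s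
      else γ t + (((μ - ε) * (t - s) ^ α) / ‖γ s - γ t‖) • (γ s - γ t)) :
    ∀ s ∈ Icc (0 : ℝ) t, ∀ r ∈ Icc (0 : ℝ) t, ‖γε s - γε r‖ ≤ μ * |s - r| ^ α := by
  intro s hs r hr
  rcases le_total s r with h | h
  · exact holder_aux α μ ε t hα hα2 hμ hε hεμ γ γε hhold hγε s r hs hr h
  · rw [norm_sub_rev, abs_sub_comm]
    exact holder_aux α μ ε t hα hα2 hμ hε hεμ γ γε hhold hγε r s hr hs h
end

section
/- Let γ_t ∈ Λ(ℝ^n) with ⟦γ_t⟧_α ≤ μ and sup-norm ‖γ_t‖_0 ≤ M_0, and let 0 < ε ≤ μ/2. Then the perturbed path γ_t^ε (the radial truncation toward γ_t(t) at level (μ−ε)|s−t|^α) satisfies ‖γ_t^ε − γ_t‖_0 ≤ 2 M_0 ε (μ−ε)^{-1} ≤ 4 M_0 ε μ^{-1}. -/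
open Set

/-- Lemma 5.1 (i): the radial truncation `γ^ε` of a path `γ` with `⟦γ⟧_α ≤ μ` and `‖γ‖₀ ≤ M₀`
satisfies `‖γ^ε − γ‖₀ ≤ 2 M₀ ε (μ−ε)⁻¹ ≤ 4 M₀ ε μ⁻¹`. -/
theorem sup_dist_of_perturbation {n : ℕ} (T α μ ε t M₀ : ℝ)
    (hα : 0 < α) (hα2 : α < 1 / 2) (hμ : 0 < μ) (hε : 0 < ε) (hεμ : ε ≤ μ / 2)
    (hM₀ : 0 < M₀) (hT : 0 < T) (ht : t ∈ Icc (0 : ℝ) T)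
    (γ γε : ℝ → EuclideanSpace ℝ (Fin n))
    (hγ0 : γ 0 = 0) (hcont : ContinuousOn γ (Icc 0 t))
    (hbound : ∀ s ∈ Icc (0 : ℝ) t, ‖γ s‖ ≤ M₀)
    (hhold : ∀ s ∈ Icc (0 : ℝ) t, ∀ r ∈ Icc (0 : ℝ) t, ‖γ s - γ r‖ ≤ μ * |s - r| ^ α)
    (hγε : ∀ s, γε s =
      if ‖γ s - γ t‖ ≤ (μ - ε) * |s - t| ^ α then γ s
      else γ t + (((μ - ε) * (t - s) ^ α) / ‖γ s - γ t‖) • (γ s - γ t)) :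
    (∀ s ∈ Icc (0 : ℝ) t, ‖γε s - γ s‖ ≤ 2 * M₀ * ε * (μ - ε)⁻¹) ∧
      2 * M₀ * ε * (μ - ε)⁻¹ ≤ 4 * M₀ * ε * μ⁻¹ := by
  have hμε : 0 < μ - ε := by linarith
  constructor
  · intro s hs
    have ht0 : 0 ≤ t := hs.1.trans hs.2
    have htmem : t ∈ Icc (0 : ℝ) t := ⟨ht0, le_refl t⟩
    rw [hγε]
    split_ifs with h
    · simp only [sub_self, norm_zero]
      positivity
    · push_neg at h
      set v := γ s - γ t with hv
      set N := ‖v‖ with hN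
      set P := (t - s) ^ α with hP
      have habs : |s - t| = t - s := by
        rw [abs_sub_comm]; exact abs_of_nonneg (by linarith [hs.2])
      have hPnn : (0:ℝ) ≤ P := Real.rpow_nonneg (by linarith [hs.2]) α
      have hlt : (μ - ε) * P < N := by rw [hP, ← habs]; exact h
      have hNpos : 0 < N := lt_of_le_of_lt (by positivity) hlt
      have hNle : N ≤ μ * P := by
        have := hhold s hs t htmem
        rwa [habs] at this
      have hN2M : N ≤ 2 * M₀ := by
        calc N ≤ ‖γ s‖ + ‖γ t‖ := norm_sub_le _ _
        _ ≤ M₀ + M₀ := add_le_add (hbound s hs) (hbound t htmem)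
        _ = 2 * M₀ := by ring
      set c := ((μ - ε) * P) / N with hc
      have heq : γ t + c • v - γ s = (c - 1) • v := by
        rw [hv]; module
      rw [heq, norm_smul, Real.norm_eq_abs]
      have hc1 : c < 1 := (div_lt_one hNpos).2 hlt
      have hcnn : 0 ≤ c := by positivity
      rw [abs_of_nonpos (by linarith)]
      have hcN : c * N = (μ - ε) * P := div_mul_cancel₀ _ (ne_of_gt hNpos)
      have key : -(c - 1) * N = N - (μ - ε) * P := by
        rw [← hcN]; ring
      rw [key, ← div_eq_mul_inv, le_div_iff₀ hμε]
      nlinarith [mul_le_mul_of_nonneg_left hN2M hε.le, mul_le_mul_of_nonneg_right hlt.le hε.le]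
  · rw [← div_eq_mul_inv, ← div_eq_mul_inv, div_le_div_iff₀ hμε hμ]
    nlinarith [mul_nonneg (mul_pos hM₀ hε).le (by linarith : (0:ℝ) ≤ μ - 2*ε)]
end

section
/- Key geometric inequality for the Hölder perturbation: let r_1, r_2, x_1, x_2 ≥ 0 and θ ∈ [0, π], and suppose r_1 ≤ (μ−ε)a_1^α, r_2 ≤ (μ−ε)a_2^α where a_1 < a_2 (representing |t−s_1| < |t−s_2|), and that whenever x_i > 0 then r_i = (μ−ε)a_i^α. Assume (r_1+x_1)^2 + (r_2+x_2)^2 − 2(r_1+x_1)(r_2+x_2)cos θ ≤ μ^2 (a_2 − a_1)^{2α} with 2α ≤ 1. Then r_1^2 + r_2^2 − 2 r_1 r_2 cos θ ≤ μ^2 (a_2 − a_1)^{2α}. (I.e., radial truncation toward a common center cannot increase the Hölder modulus, using that c ↦ c^{2α} is subadditive for 2α ∈ (0,1].) -/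
open Real

private lemma real_rpow_add_le_add_rpow {a b : ℝ} (p : ℝ) (ha : 0 ≤ a) (hb : 0 ≤ b)
    (hp : 0 ≤ p) (hp1 : p ≤ 1) : (a + b) ^ p ≤ a ^ p + b ^ p := by
  lift a to NNReal using ha
  lift b to NNReal using hb
  have h := NNReal.rpow_add_le_add_rpow a b hp hp1
  exact_mod_cast h

private lemma sq_rpow_aux {x : ℝ} (hx : 0 ≤ x) (α : ℝ) : (x ^ α) ^ 2 = x ^ (2 * α) := by
  rw [mul_comm, Real.rpow_mul hx, Real.rpow_two]

set_option maxHeartbeats 1000000 in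
/-- The key geometric inequality behind Lemma 5.1 (ii): radial truncation toward a common
center does not increase the (squared) Hölder increment, via the law of cosines. -/
theorem truncation_law_of_cosines (μ ε α a₁ a₂ r₁ r₂ x₁ x₂ θ : ℝ)
    (hε : 0 < ε) (hεμ : ε < μ) (hα : 0 < α) (hα2 : 2 * α ≤ 1)
    (hθ0 : 0 ≤ θ) (hθπ : θ ≤ Real.pi)
    (ha₁ : 0 ≤ a₁) (ha12 : a₁ < a₂)
    (hr₁0 : 0 ≤ r₁) (hr₂0 : 0 ≤ r₂) (hx₁0 : 0 ≤ x₁) (hx₂0 : 0 ≤ x₂)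
    (hr₁le : r₁ ≤ (μ - ε) * a₁ ^ α) (hr₂le : r₂ ≤ (μ - ε) * a₂ ^ α)
    (hx₁ : 0 < x₁ → r₁ = (μ - ε) * a₁ ^ α)
    (hx₂ : 0 < x₂ → r₂ = (μ - ε) * a₂ ^ α)
    (hhyp : (r₁ + x₁) ^ 2 + (r₂ + x₂) ^ 2 - 2 * (r₁ + x₁) * (r₂ + x₂) * Real.cos θ
      ≤ μ ^ 2 * (a₂ - a₁) ^ (2 * α)) :
    r₁ ^ 2 + r₂ ^ 2 - 2 * r₁ * r₂ * Real.cos θ ≤ μ ^ 2 * (a₂ - a₁) ^ (2 * α) := by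
  set c := Real.cos θ with hc_def
  have hc1 : c ≤ 1 := Real.cos_le_one θ
  have hm1 : 0 ≤ r₁ * (1 - c) := mul_nonneg hr₁0 (by linarith)
  have hm2 : 0 ≤ r₂ * (1 - c) := mul_nonneg hr₂0 (by linarith)
  have hμε : (0:ℝ) < μ - ε := by linarith
  set ρ₁ := (μ - ε) * a₁ ^ α with hρ₁def
  set ρ₂ := (μ - ε) * a₂ ^ α with hρ₂def
  have ha₂ : (0:ℝ) ≤ a₂ := le_trans ha₁ ha12.le
  have hd0 : (0:ℝ) ≤ a₂ - a₁ := by linarith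
  have hρ₁0 : 0 ≤ ρ₁ := mul_nonneg hμε.le (Real.rpow_nonneg ha₁ α)
  have hρ₁₂ : ρ₁ ≤ ρ₂ := by
    have := Real.rpow_le_rpow ha₁ ha12.le hα.le
    exact mul_le_mul_of_nonneg_left this hμε.le
  -- key subadditivity fact : ρ₂² ≤ ρ₁² + (μ-ε)²(a₂-a₁)^{2α}
  have hsub : a₂ ^ (2 * α) ≤ a₁ ^ (2 * α) + (a₂ - a₁) ^ (2 * α) := by
    have h := real_rpow_add_le_add_rpow (2 * α) ha₁ hd0 (by positivity) hα2
    have : a₁ + (a₂ - a₁) = a₂ := by ring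
    rwa [this] at h
  have hM0 : (0:ℝ) ≤ (a₂ - a₁) ^ (2 * α) := Real.rpow_nonneg hd0 _
  have hkey : ρ₂ ^ 2 ≤ ρ₁ ^ 2 + μ ^ 2 * (a₂ - a₁) ^ (2 * α) := by
    have e₁ : ρ₁ ^ 2 = (μ - ε) ^ 2 * a₁ ^ (2 * α) := by
      rw [hρ₁def, mul_pow, sq_rpow_aux ha₁]
    have e₂ : ρ₂ ^ 2 = (μ - ε) ^ 2 * a₂ ^ (2 * α) := by
      rw [hρ₂def, mul_pow, sq_rpow_aux ha₂]
    have hμ2 : (μ - ε) ^ 2 ≤ μ ^ 2 := by nlinarith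
    have h1 : (μ - ε) ^ 2 * a₂ ^ (2 * α)
        ≤ (μ - ε) ^ 2 * (a₁ ^ (2 * α) + (a₂ - a₁) ^ (2 * α)) :=
      mul_le_mul_of_nonneg_left hsub (by positivity)
    have h2 : (μ - ε) ^ 2 * (a₂ - a₁) ^ (2 * α) ≤ μ ^ 2 * (a₂ - a₁) ^ (2 * α) :=
      mul_le_mul_of_nonneg_right hμ2 hM0
    calc ρ₂ ^ 2 = (μ - ε) ^ 2 * a₂ ^ (2 * α) := e₂
      _ ≤ (μ - ε) ^ 2 * a₁ ^ (2 * α) + (μ - ε) ^ 2 * (a₂ - a₁) ^ (2 * α) := by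
          rw [mul_add] at h1; exact h1
      _ ≤ ρ₁ ^ 2 + μ ^ 2 * (a₂ - a₁) ^ (2 * α) := by rw [e₁]; linarith
  -- main case analysis
  rcases le_or_gt r₁ (c * r₂) with hB | hA₁
  · -- Case B : r₁ ≤ c r₂, hence Q(r₁,r₂) ≤ r₂² - r₁²
    have hQle : r₁ ^ 2 + r₂ ^ 2 - 2 * r₁ * r₂ * c ≤ r₂ ^ 2 - r₁ ^ 2 := by
      nlinarith [mul_le_mul_of_nonneg_left hB hr₁0]
    rcases eq_or_lt_of_le hx₁0 with hx₁z | hx₁p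
    · -- x₁ = 0 : monotone in the second coordinate
      have hr₂c : c * r₁ ≤ r₂ := by nlinarith [hm1, hm2, hB]
      have hmono : r₁ ^ 2 + r₂ ^ 2 - 2 * r₁ * r₂ * c
          ≤ (r₁ + x₁) ^ 2 + (r₂ + x₂) ^ 2 - 2 * (r₁ + x₁) * (r₂ + x₂) * c := by
        rw [← hx₁z]
        nlinarith [mul_nonneg hx₂0 (sub_nonneg.mpr hr₂c), sq_nonneg x₂]
      linarith
    · -- x₁ > 0 : r₁ = ρ₁, and Q ≤ r₂² - ρ₁² ≤ ρ₂² - ρ₁² ≤ μ²(a₂-a₁)^{2α}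
      have hr₁ρ : r₁ = ρ₁ := hx₁ hx₁p
      have hr₂sq : r₂ ^ 2 ≤ ρ₂ ^ 2 := by
        exact pow_le_pow_left₀ hr₂0 hr₂le 2
      rw [hr₁ρ] at hQle ⊢
      linarith
  · rcases le_or_gt r₂ (c * r₁) with hC | hA₂
    · -- Case C : r₂ ≤ c r₁
      rcases eq_or_lt_of_le hx₂0 with hx₂z | hx₂p
      · -- x₂ = 0 : monotone in the first coordinate
        have hmono : r₁ ^ 2 + r₂ ^ 2 - 2 * r₁ * r₂ * c
            ≤ (r₁ + x₁) ^ 2 + (r₂ + x₂) ^ 2 - 2 * (r₁ + x₁) * (r₂ + x₂) * c := by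
          rw [← hx₂z]
          nlinarith [mul_nonneg hx₁0 (sub_nonneg.mpr hA₁.le), sq_nonneg x₁]
        linarith
      · -- x₂ > 0 : contradiction, since then r₁ ≤ ρ₁ ≤ ρ₂ = r₂ ≤ c r₁ ≤ r₁
        exfalso
        have hr₂ρ : r₂ = ρ₂ := hx₂ hx₂p
        have h12 : r₁ ≤ r₂ := by rw [hr₂ρ]; exact le_trans hr₁le hρ₁₂
        nlinarith [hA₁, hC, h12, hm1, hm2]
    · -- Case A : r₁ > c r₂ and r₂ > c r₁ — full monotonicity
      have hmono : r₁ ^ 2 + r₂ ^ 2 - 2 * r₁ * r₂ * c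
          ≤ (r₁ + x₁) ^ 2 + (r₂ + x₂) ^ 2 - 2 * (r₁ + x₁) * (r₂ + x₂) * c := by
        nlinarith [mul_nonneg hx₁0 (sub_nonneg.mpr hA₁.le),
          mul_nonneg hx₂0 (sub_nonneg.mpr hA₂.le), sq_nonneg (x₁ - x₂),
          mul_nonneg (mul_nonneg hx₁0 hx₂0) (sub_nonneg.mpr hc1)]
      linarith
end

section
/- Non-confinement of Brownian motion in a Hölder ball starting at the boundary: let W be a one-dimensional standard Brownian motion, α ∈ (0,1), μ > 0, and let γ_t be a continuous path on [0,t] such that γ_t(t) − γ_t(t_1) = μ|t − t_1|^α for some t_1 ∈ [0,t). Define W^{γ_t}(s) := γ_t(s) for s ∈ [0,t) and W^{γ_t}(s) := W(s) − W(t) + γ_t(t) for s ∈ [t,T]. Then P{ ∃ δ > 0 such that ⟦W^{γ_t}_{t+δ}⟧_α ≤ μ } = 0; in particular, with probability one the concatenated path exits the set C^α_μ immediately after time t. -/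
open Set MeasureTheory ProbabilityTheory

/-- A standard one-dimensional Brownian motion: starts at `0`, has continuous sample paths,
Gaussian increments `W(t) − W(s) ~ N(0, t−s)`, and independent increments. -/
def IsStandardBrownianMotion {Ω : Type*} [MeasurableSpace Ω] (P : Measure Ω)
    (W : ℝ → Ω → ℝ) : Prop :=
  (∀ t : ℝ, Measurable (W t)) ∧
  (∀ ω, W 0 ω = 0) ∧
  (∀ ω, Continuous fun t => W t ω) ∧
  (∀ s t : ℝ, 0 ≤ s → s ≤ t →
    Measure.map (fun ω => W t ω - W s ω) P = gaussianReal 0 (Real.toNNReal (t - s))) ∧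
  (∀ (k : ℕ) (ts : Fin (k + 1) → ℝ), Monotone ts → (∀ i, 0 ≤ ts i) →
    iIndepFun
      (fun i : Fin k => fun ω => W (ts i.succ) ω - W (ts i.castSucc) ω) P)


/-!
If `W^γ` stayed in the Hölder ball on `[0, t + δ]`, then for `0 ≤ h' ≤ h ≤ δ` comparing with
the boundary point `t₁` and using concavity of `x ↦ x^α` would give
`W(t+h) − W(t+h') ≤ μ((t−t₁+h)^α − (t−t₁)^α) + μ h'^α ≤ c h + μ h'^α`
with `c = μ α (t−t₁)^(α−1)`. Along scales `h_k ↓ 0` with `h_{k+1} ≤ h_k / 2`, `c h_k ≤ √h_k` and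
`μ h_{k+1}^α ≤ √h_k`, the increments `W(t+h_k) − W(t+h_{k+1})` would thus eventually all be at
most `2√h_k`. But these increments are independent centred Gaussians of variance at least
`h_k / 2`, each exceeding `2√h_k` with probability at least `P(N(0,1) > 2√2) > 0`, so by the
second Borel–Cantelli lemma infinitely many of them do, almost surely.
-/

open Filter Topology
open scoped NNReal ENNReal

lemma rpow_add_le_add_mul_rpow_sub_one {α d h : ℝ} (hα : 0 ≤ α) (hα1 : α ≤ 1) (hd : 0 < d)
    (hh : 0 ≤ h) : (d + h) ^ α ≤ d ^ α + α * d ^ (α - 1) * h := by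
  have hbern : (1 + h / d) ^ α ≤ 1 + α * (h / d) :=
    rpow_one_add_le_one_add_mul_self (by linarith [div_nonneg hh hd.le]) hα hα1
  calc (d + h) ^ α = d ^ α * (1 + h / d) ^ α := by
        rw [← Real.mul_rpow hd.le (by positivity)]
        field_simp
    _ ≤ d ^ α * (1 + α * (h / d)) := by gcongr
    _ = d ^ α + α * d ^ (α - 1) * h := by
        rw [Real.rpow_sub_one hd.ne']
        field_simp

lemma sub_le_of_holderOn_of_eq {f : ℝ → ℝ} {μ α t t₁ δ h h' : ℝ} (hα : 0 ≤ α) (hα1 : α ≤ 1)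
    (hμ : 0 ≤ μ) (ht₁ : t₁ ∈ Ico 0 t) (hh : h ∈ Icc 0 δ) (hh' : h' ∈ Icc 0 δ)
    (hf : ∀ s₁ ∈ Icc 0 (t + δ), ∀ s₂ ∈ Icc 0 (t + δ), |f s₁ - f s₂| ≤ μ * |s₁ - s₂| ^ α)
    (hbd : f t - f t₁ = μ * (t - t₁) ^ α) :
    f (t + h) - f (t + h') ≤ μ * α * (t - t₁) ^ (α - 1) * h + μ * h' ^ α := by
  obtain ⟨ht₁0, ht₁t⟩ := ht₁
  have hδ : 0 ≤ δ := hh.1.trans hh.2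
  have mem : ∀ s ∈ Icc 0 δ, t + s ∈ Icc 0 (t + δ) := fun s hs =>
    ⟨by linarith [hs.1], by linarith [hs.2]⟩
  have hrise : f (t + h) - f t₁ ≤ μ * (t - t₁ + h) ^ α := by
    have := hf _ (mem h hh) t₁ ⟨ht₁0, by linarith⟩
    rw [show t + h - t₁ = t - t₁ + h by ring,
      abs_of_nonneg (by linarith [hh.1] : 0 ≤ t - t₁ + h)] at this
    exact (abs_le.1 this).2
  have hdrop : f t - f (t + h') ≤ μ * h' ^ α := by
    have := hf t (by simpa using mem 0 ⟨le_rfl, hδ⟩) _ (mem h' hh')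
    rw [show t - (t + h') = -h' by ring, abs_neg, abs_of_nonneg hh'.1] at this
    exact (abs_le.1 this).2
  have hconc := rpow_add_le_add_mul_rpow_sub_one hα hα1 (sub_pos.2 ht₁t) hh.1
  linarith [mul_le_mul_of_nonneg_left hconc hμ]

noncomputable def holderScale (c μ α : ℝ) : ℕ → ℝ
  | 0 => min 1 (c⁻¹ ^ 2)
  | k + 1 => min (holderScale c μ α k / 2) ((√(holderScale c μ α k) / μ) ^ α⁻¹)

section holderScale

variable {c μ α : ℝ}

lemma holderScale_succ_le_half (k : ℕ) : holderScale c μ α (k + 1) ≤ holderScale c μ α k / 2 :=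
  min_le_left _ _

lemma holderScale_pos (hc : 0 < c) (hμ : 0 < μ) (k : ℕ) : 0 < holderScale c μ α k := by
  induction k with
  | zero => exact lt_min one_pos (by positivity)
  | succ k ih => exact lt_min (by positivity) (by positivity)

lemma holderScale_le_half_pow (k : ℕ) : holderScale c μ α k ≤ (1 / 2) ^ k := by
  induction k with
  | zero => exact min_le_left _ _
  | succ k ih =>
    calc holderScale c μ α (k + 1) ≤ holderScale c μ α k / 2 := holderScale_succ_le_half k
      _ ≤ (1 / 2) ^ (k + 1) := by rw [pow_succ]; linarith

lemma tendsto_holderScale (hc : 0 < c) (hμ : 0 < μ) :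
    Tendsto (holderScale c μ α) atTop (𝓝 0) :=
  squeeze_zero (fun k => (holderScale_pos hc hμ k).le) holderScale_le_half_pow
    (tendsto_pow_atTop_nhds_zero_of_lt_one (by norm_num) (by norm_num))

lemma holderScale_antitone (hc : 0 < c) (hμ : 0 < μ) : Antitone (holderScale c μ α) :=
  antitone_nat_of_succ_le fun k => by
    have := holderScale_pos (α := α) hc hμ k
    linarith [holderScale_succ_le_half (c := c) (μ := μ) (α := α) k]

lemma sqrt_holderScale_le (hc : 0 < c) (hμ : 0 < μ) (k : ℕ) :
    √(holderScale c μ α k) ≤ √2 * √(holderScale c μ α k - holderScale c μ α (k + 1)) := by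
  have := holderScale_pos (α := α) hc hμ k
  have := holderScale_succ_le_half (c := c) (μ := μ) (α := α) k
  rw [← Real.sqrt_mul zero_le_two]
  exact Real.sqrt_le_sqrt (by linarith)

lemma mul_holderScale_add_le (hc : 0 < c) (hμ : 0 < μ) (hα : 0 < α) (k : ℕ) :
    c * holderScale c μ α k + μ * holderScale c μ α (k + 1) ^ α ≤ 2 * √(holderScale c μ α k) := by
  set h := holderScale c μ α k
  have hh : 0 < h := holderScale_pos hc hμ k
  have hdrift : c * h ≤ √h := by
    have hsq : √h ≤ c⁻¹ := Real.sqrt_le_iff.2 ⟨by positivity,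
      (holderScale_antitone hc hμ (Nat.zero_le k)).trans (min_le_right _ _)⟩
    calc c * h = c * √h * √h := by rw [mul_assoc, Real.mul_self_sqrt hh.le]
      _ ≤ c * c⁻¹ * √h := by gcongr
      _ = √h := by field_simp
  have hjump : μ * holderScale c μ α (k + 1) ^ α ≤ √h := by
    calc μ * holderScale c μ α (k + 1) ^ α ≤ μ * ((√h / μ) ^ α⁻¹) ^ α := by
          gcongr
          · exact (holderScale_pos hc hμ _).le
          · exact min_le_right _ _
      _ = √h := by
          rw [← Real.rpow_mul (by positivity), inv_mul_cancel₀ hα.ne', Real.rpow_one]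
          field_simp
  linarith

end holderScale

lemma iIndepFun_of_forall_fin {Ω β : Type*} [MeasurableSpace Ω] [MeasurableSpace β]
    {μ : Measure Ω} {f : ℕ → Ω → β} (h : ∀ n, iIndepFun (fun i : Fin n => f i) μ) :
    iIndepFun f μ := by
  refine iIndepFun_iff_finset.2 fun s => ?_
  obtain ⟨n, hn⟩ : ∃ n, ∀ i ∈ s, i < n :=
    ⟨s.sup id + 1, fun i hi => Nat.lt_succ_of_le (Finset.le_sup (f := id) hi)⟩
  exact (h n).precomp (g := fun i : s => ⟨i, hn i i.2⟩)
    fun i j hij => Subtype.ext (congrArg Fin.val hij)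

lemma ae_frequently_lt_of_iIndepFun {Ω : Type*} [MeasurableSpace Ω] {P : Measure Ω}
    [IsProbabilityMeasure P] {X : ℕ → Ω → ℝ} (hX : iIndepFun X P)
    (hXm : ∀ k, Measurable (X k)) {a : ℕ → ℝ} {p : ℝ≥0∞} (hp : p ≠ 0)
    (hpX : ∀ k, p ≤ P {ω | a k < X k ω}) :
    ∀ᵐ ω ∂P, ∃ᶠ k in atTop, a k < X k ω := by
  set F : ℕ → Set Ω := fun k => X k ⁻¹' Ioi (a k)
  have hFm : ∀ k, MeasurableSet (F k) := fun k => hXm k measurableSet_Ioi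
  have hF : iIndepSet F P := (iIndepSet_iff_meas_biInter hFm).2 fun S =>
    hX.measure_inter_preimage_eq_mul S fun _ _ => measurableSet_Ioi
  have hsum : ∑' k, P (F k) = ∞ :=
    top_le_iff.1 <| (ENNReal.tsum_const_eq_top_of_ne_zero hp).symm.le.trans
      (ENNReal.tsum_le_tsum hpX)
  have hlimsup := measure_limsup_eq_one hFm hF hsum
  rw [ae_iff]
  convert (prob_compl_eq_zero_iff (MeasurableSet.measurableSet_limsup hFm)).2 hlimsup using 2
  ext ω
  simp [F, mem_limsup_iff_frequently_mem]

lemma gaussianReal_Ioi_pos (m c : ℝ) {v : ℝ≥0} (hv : v ≠ 0) : 0 < gaussianReal m v (Ioi c) :=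
  pos_iff_ne_zero.2 fun h => by
    simpa using gaussianReal_absolutelyContinuous' m hv h

lemma gaussianReal_Ioi_le_of_le_mul_sqrt {v : ℝ≥0} (hv : v ≠ 0) {a c : ℝ}
    (ha : a ≤ c * √v) : gaussianReal 0 1 (Ioi c) ≤ gaussianReal 0 v (Ioi a) := by
  have hsv : 0 < √(v : ℝ) := Real.sqrt_pos.2 (by positivity)
  have hstd : (gaussianReal 0 v).map (· / √v) = gaussianReal 0 1 := by
    rw [gaussianReal_map_div_const, zero_div]
    congr 1
    ext
    simp [Real.sq_sqrt, hv]
  rw [← hstd, Measure.map_apply (by fun_prop) measurableSet_Ioi]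
  refine measure_mono fun x hx => ha.trans_lt ?_
  simpa [lt_div_iff₀ hsv] using hx

namespace IsStandardBrownianMotion

variable {Ω : Type*} [MeasurableSpace Ω] {P : Measure Ω} {W : ℝ → Ω → ℝ}

lemma iIndepFun_sub_of_antitone (hW : IsStandardBrownianMotion P W) {τ : ℕ → ℝ}
    (hτ : Antitone τ) (hτ0 : ∀ k, 0 ≤ τ k) :
    iIndepFun (fun k ω => W (τ k) ω - W (τ (k + 1)) ω) P := by
  refine iIndepFun_of_forall_fin fun n => ?_
  have h := hW.2.2.2.2 n (fun i => τ (n - i)) (fun i j hij => hτ (by omega)) fun i => hτ0 _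
  convert h.precomp (Fin.rev_injective (n := n)) using 3 with i
  simp only [Fin.val_succ, Fin.val_castSucc, Fin.val_rev]
  congr 3 <;> omega

lemma gaussianReal_Ioi_le_measure (hW : IsStandardBrownianMotion P W) {s u a c : ℝ}
    (hs : 0 ≤ s) (hsu : s < u) (ha : a ≤ c * √(u - s)) :
    gaussianReal 0 1 (Ioi c) ≤ P {ω | a < W u ω - W s ω} := by
  have hlaw := hW.2.2.2.1 s u hs hsu.le
  have hmeas : Measurable fun ω => W u ω - W s ω := (hW.1 u).sub (hW.1 s)
  rw [show {ω | a < W u ω - W s ω} = (fun ω => W u ω - W s ω) ⁻¹' Ioi a from rfl,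
    ← Measure.map_apply hmeas measurableSet_Ioi, hlaw]
  exact gaussianReal_Ioi_le_of_le_mul_sqrt (by simpa using hsu)
    (by rwa [Real.coe_toNNReal _ (by linarith)])

end IsStandardBrownianMotion

theorem brownian_exits_holder_ball_general {Ω : Type*} [MeasurableSpace Ω]
    (P : Measure Ω) [IsProbabilityMeasure P] (W : ℝ → Ω → ℝ)
    (hW : IsStandardBrownianMotion P W)
    (T t t₁ α μ : ℝ) (hα : 0 < α) (hα1 : α < 1) (hμ : 0 < μ)
    (ht : t ∈ Ico (0 : ℝ) T) (ht₁ : t₁ ∈ Ico (0 : ℝ) t)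
    (γ : ℝ → ℝ)
    (hboundary : γ t - γ t₁ = μ * (t - t₁) ^ α)
    (Wγ : Ω → ℝ → ℝ)
    (hWγ : ∀ ω s, Wγ ω s = if s < t then γ s else W s ω - W t ω + γ t) :
    P {ω | ∃ δ : ℝ, 0 < δ ∧ t + δ ≤ T ∧
        ∀ s₁ ∈ Icc (0 : ℝ) (t + δ), ∀ s₂ ∈ Icc (0 : ℝ) (t + δ),
          |Wγ ω s₁ - Wγ ω s₂| ≤ μ * |s₁ - s₂| ^ α} = 0 := by
  set c := μ * α * (t - t₁) ^ (α - 1)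
  have hc : 0 < c := by have := sub_pos.2 ht₁.2; positivity
  set H := holderScale c μ α
  have hH : ∀ k, 0 < H k := holderScale_pos hc hμ
  have hX := hW.iIndepFun_sub_of_antitone (τ := fun k => t + H k)
    ((holderScale_antitone hc hμ).const_add t)
    (fun k => by linarith [ht.1, hH k])
  have hfreq : ∀ᵐ ω ∂P, ∃ᶠ k in atTop, 2 * √(H k) < W (t + H k) ω - W (t + H (k + 1)) ω :=
    ae_frequently_lt_of_iIndepFun hX (fun k => (hW.1 _).sub (hW.1 _))
      (gaussianReal_Ioi_pos 0 (2 * √2) one_ne_zero).ne' fun k =>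
      hW.gaussianReal_Ioi_le_measure (by linarith [ht.1, hH (k + 1)])
        (by linarith [holderScale_succ_le_half (c := c) (μ := μ) (α := α) k, hH k])
        (by simpa [mul_assoc] using sqrt_holderScale_le hc hμ k)
  refine measure_mono_null ?_ (ae_iff.1 hfreq)
  rintro ω ⟨δ, hδ, -, hhold⟩
  simp only [mem_ofPred_eq, not_frequently, not_lt]
  filter_upwards [(tendsto_holderScale hc hμ).eventually (ge_mem_nhds hδ)] with k hk
  have hWγ_after : ∀ s, 0 ≤ s → Wγ ω (t + s) = W (t + s) ω - W t ω + γ t := fun s hs => by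
    rw [hWγ, if_neg (by linarith)]
  have hrise := sub_le_of_holderOn_of_eq hα.le hα1.le hμ.le ht₁ ⟨(hH k).le, hk⟩
    ⟨(hH (k + 1)).le, (holderScale_antitone hc hμ k.le_succ).trans hk⟩ hhold
    (by rwa [hWγ, hWγ, if_neg (lt_irrefl t), if_pos ht₁.2, sub_self, zero_add])
  rw [hWγ_after _ (hH k).le, hWγ_after _ (hH (k + 1)).le] at hrise
  linarith [mul_holderScale_add_le hc hμ hα k]

/-- Non-confinement in the Hölder ball starting at the boundary: if the initial path `γ`
attains its `α`-Hölder modulus `μ` between some `t₁ < t` and the endpoint `t`, i.e.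
`γ(t) − γ(t₁) = μ(t−t₁)^α`, then the Brownian continuation `W^γ` of `γ` after time `t`
a.s. admits no `δ > 0` with `⟦W^γ_{t+δ}⟧_α ≤ μ`: it exits `C^α_μ` immediately. -/
theorem brownian_exits_holder_ball {Ω : Type*} [MeasurableSpace Ω]
    (P : Measure Ω) [IsProbabilityMeasure P] (W : ℝ → Ω → ℝ)
    (hW : IsStandardBrownianMotion P W)
    (T t t₁ α μ : ℝ) (hα : 0 < α) (hα1 : α < 1) (hμ : 0 < μ)
    (ht : t ∈ Ico (0 : ℝ) T) (ht₁ : t₁ ∈ Ico (0 : ℝ) t)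
    (γ : ℝ → ℝ) (hγ0 : γ 0 = 0) (hγcont : ContinuousOn γ (Icc 0 t))
    (hγhold : ∀ s ∈ Icc (0 : ℝ) t, ∀ r ∈ Icc (0 : ℝ) t, |γ s - γ r| ≤ μ * |s - r| ^ α)
    (hboundary : γ t - γ t₁ = μ * (t - t₁) ^ α)
    (Wγ : Ω → ℝ → ℝ)
    (hWγ : ∀ ω s, Wγ ω s = if s < t then γ s else W s ω - W t ω + γ t) :
    P {ω | ∃ δ : ℝ, 0 < δ ∧ t + δ ≤ T ∧
        ∀ s₁ ∈ Icc (0 : ℝ) (t + δ), ∀ s₂ ∈ Icc (0 : ℝ) (t + δ),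
          |Wγ ω s₁ - Wγ ω s₂| ≤ μ * |s₁ - s₂| ^ α} = 0 :=
  brownian_exits_holder_ball_general P W hW T t t₁ α μ hα hα1 hμ ht ht₁ γ hboundary Wγ hWγ
end
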